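/- If the entries g^{(n)}_i are i.i.d. Rademacher, then the variance of the trace estimator satisfies Var(X) ≤ 2·( ‖A‖_F² − Σ_{j=1}^d a²_{j,…,j} ). -/

import Mathlib

open MeasureTheory ProbabilityTheory Finset

/-- The diagonal estimator: `y i = Σ_j a_{j_1,…,j_{N-1},i} ∏_t g^{(t)}_{j_t} g^{(t)}_i`,
where the tensor has order `N = M + 1`. -/
noncomputable def diagEstimator {M d : ℕ} (a : (Fin (M + 1) → Fin d) → ℝ)
    {Ω : Type*} (g : Fin M → Fin d → Ω → ℝ) (i : Fin d) (ω : Ω) : ℝ :=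
  ∑ j : Fin M → Fin d, a (Fin.snoc j i) * ∏ t : Fin M, g t (j t) ω * g t i ω

/-- The trace estimator `X = Σ_i y_i`. -/
noncomputable def traceEstimator {M d : ℕ} (a : (Fin (M + 1) → Fin d) → ℝ)
    {Ω : Type*} (g : Fin M → Fin d → Ω → ℝ) (ω : Ω) : ℝ :=
  ∑ i : Fin d, diagEstimator a g i ω

/-- The Rademacher distribution: uniform on `{-1, +1}`. -/
noncomputable def radMeasure : Measure ℝ :=
  (2 : ENNReal)⁻¹ • Measure.dirac 1 + (2 : ENNReal)⁻¹ • Measure.dirac (-1)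

/-!
Write `X = ∑ₓ aₓ Zₓ`, where `Zₓ` is the monomial `∏ₜ g⁽ᵗ⁾_{xₜ} g⁽ᵗ⁾_{x_N}` in the independent
Rademacher variables. A monomial has mean `1` if all its exponents are even and `0` otherwise, so
`E[Zₓ Z_y] = 1` exactly when the exponent vectors of `x` and `y` agree mod 2. Grouping indices by
this parity vector `σ x` gives `Var X = ∑_{s ≠ 0} (∑_{σ x = s} aₓ)²`. The parity vanishes exactly on
the diagonal indices, and a nonzero parity vector is shared by at most two indices (an index is
determined by its parity and its last coordinate, which takes one of two values), so
Cauchy–Schwarz on each fibre yields the factor `2`.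
-/

section Fibers

variable {α β : Type*} [Fintype α] [DecidableEq β]

lemma sum_sum_ite_eq_sum_sq_sum_fiber [Fintype β] (σ : α → β) (a : α → ℝ) :
    ∑ x, ∑ y, (if σ x = σ y then a x * a y else 0) = ∑ s, (∑ x with σ x = s, a x) ^ 2 := by
  simp_rw [sq, sum_mul_sum]
  rw [← sum_fiberwise univ σ fun x => ∑ y, if σ x = σ y then a x * a y else 0]
  refine sum_congr rfl fun s _ => sum_congr rfl fun x hx => ?_
  rw [(mem_filter.mp hx).2, sum_filter]
  simp only [@eq_comm _ s]

lemma sum_sq_sum_fiber_le (σ : α → β) (a : α → ℝ) (t : Finset β) (K : ℕ)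
    (hK : ∀ s ∈ t, #{x | σ x = s} ≤ K) :
    ∑ s ∈ t, (∑ x with σ x = s, a x) ^ 2 ≤ K * ∑ x with σ x ∈ t, a x ^ 2 := by
  rw [← sum_fiberwise_eq_sum_filter univ t σ, mul_sum]
  refine sum_le_sum fun s hs => (sq_sum_le_card_mul_sum_sq (s := {x | σ x = s}) (f := a)).trans ?_
  gcongr
  exact_mod_cast hK s hs

end Fibers

section Rademacher

variable {Ω : Type*} [MeasurableSpace Ω] {μ : Measure Ω}

lemma integral_pow_radMeasure (n : ℕ) :
    ∫ x, x ^ n ∂radMeasure = if Even n then 1 else 0 := by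
  have hint : ∀ c : ℝ, Integrable (fun x : ℝ => x ^ n) (Measure.dirac c) := fun c =>
    integrable_dirac enorm_lt_top
  rw [radMeasure, integral_add_measure ((hint 1).smul_measure (by simp))
    ((hint (-1)).smul_measure (by simp)), integral_smul_measure, integral_smul_measure,
    integral_dirac, integral_dirac]
  rcases Nat.even_or_odd n with h | h
  · simp [h, h.neg_pow]
    norm_num
  · simp [h.neg_pow, Nat.not_even_iff_odd.mpr h]

lemma ae_abs_eq_one_of_map_eq_radMeasure {f : Ω → ℝ} (hf : Measurable f)
    (h : μ.map f = radMeasure) : ∀ᵐ ω ∂μ, |f ω| = 1 := by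
  have : ∀ᵐ y ∂radMeasure, |y| = 1 := by
    simp [radMeasure]
  exact ae_of_ae_map hf.aemeasurable (h ▸ this)

end Rademacher

section Monomials

variable {ι Ω : Type*} [Fintype ι] [MeasurableSpace Ω] {μ : Measure Ω}
  {ε : ι → Ω → ℝ}

lemma memLp_prod_pow_of_map_eq_radMeasure [IsFiniteMeasure μ] (hmeas : ∀ p, Measurable (ε p))
    (hdist : ∀ p, μ.map (ε p) = radMeasure) (e : ι → ℕ) (q : ENNReal) :
    MemLp (fun ω => ∏ p, ε p ω ^ e p) q μ := by
  refine MemLp.of_bound (by fun_prop) 1 ?_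
  filter_upwards [ae_all_iff.mpr fun p => ae_abs_eq_one_of_map_eq_radMeasure (hmeas p) (hdist p)]
    with ω hω
  simp [hω]

lemma integral_prod_pow_of_iIndepFun_radMeasure (hmeas : ∀ p, Measurable (ε p))
    (hind : iIndepFun ε μ) (hdist : ∀ p, μ.map (ε p) = radMeasure) (e : ι → ℕ) :
    ∫ ω, ∏ p, ε p ω ^ e p ∂μ = if ∀ p, Even (e p) then 1 else 0 := by
  rw [hind.integral_fun_prod_comp (f := fun p x => x ^ e p) (fun p => (hmeas p).aemeasurable)
    (fun p => by fun_prop), ← Fintype.prod_boole]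
  refine prod_congr rfl fun p _ => ?_
  rw [← integral_map (f := fun x : ℝ => x ^ e p) (hmeas p).aemeasurable (by fun_prop), hdist,
    integral_pow_radMeasure]

end Monomials

lemma even_add_iff_natCast_zmod_two_eq (m n : ℕ) : Even (m + n) ↔ (m : ZMod 2) = n := by
  rw [← ZMod.natCast_eq_zero_iff_even, Nat.cast_add, add_eq_zero_iff_eq_neg,
    ZMod.neg_eq_self_mod_two]

section Variance

variable {ι Ω : Type*} [Fintype ι] [DecidableEq ι] [MeasurableSpace Ω] {μ : Measure Ω}
  [IsProbabilityMeasure μ] {ε : ι → Ω → ℝ}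

theorem variance_sum_mul_prod_pow_of_iIndepFun_radMeasure (hmeas : ∀ p, Measurable (ε p))
    (hind : iIndepFun ε μ) (hdist : ∀ p, μ.map (ε p) = radMeasure)
    {α : Type*} [Fintype α] (a : α → ℝ) (e : α → ι → ℕ) :
    variance (fun ω => ∑ x, a x * ∏ p, ε p ω ^ e x p) μ =
      ∑ s : ι → ZMod 2 with s ≠ 0, (∑ x with (fun p => (e x p : ZMod 2)) = s, a x) ^ 2 := by
  set σ : α → ι → ZMod 2 := fun x p => e x p
  have hmem := memLp_prod_pow_of_map_eq_radMeasure hmeas hdist (μ := μ)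
  have hint := integral_prod_pow_of_iIndepFun_radMeasure hmeas hind hdist
  have hmean : ∫ ω, ∑ x, a x * ∏ p, ε p ω ^ e x p ∂μ = ∑ x with σ x = 0, a x := by
    rw [integral_finsetSum _ fun x _ => ((hmem _ 1).integrable le_rfl).const_mul _, sum_filter]
    refine sum_congr rfl fun x _ => ?_
    simp [integral_const_mul, hint, σ, funext_iff, ZMod.natCast_eq_zero_iff_even]
  have hsq : ∫ ω, (∑ x, a x * ∏ p, ε p ω ^ e x p) ^ 2 ∂μ =
      ∑ x, ∑ y, if σ x = σ y then a x * a y else 0 := by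
    have hexpand : ∀ ω, (∑ x, a x * ∏ p, ε p ω ^ e x p) ^ 2 =
        ∑ x, ∑ y, a x * a y * ∏ p, ε p ω ^ (e x p + e y p) := fun ω => by
      rw [sq, sum_mul_sum]
      refine sum_congr rfl fun x _ => sum_congr rfl fun y _ => ?_
      rw [mul_mul_mul_comm, ← prod_mul_distrib]
      simp only [pow_add]
    simp_rw [hexpand]
    rw [integral_finsetSum _ fun x _ => integrable_finsetSum _ fun y _ =>
      ((hmem _ 1).integrable le_rfl).const_mul _]
    refine sum_congr rfl fun x _ => ?_
    rw [integral_finsetSum _ fun y _ => ((hmem _ 1).integrable le_rfl).const_mul _]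
    refine sum_congr rfl fun y _ => ?_
    simp [integral_const_mul, hint, σ, funext_iff, even_add_iff_natCast_zmod_two_eq]
  rw [variance_eq_sub (memLp_finsetSum _ fun x _ => (hmem _ 2).const_mul _)]
  simp only [Pi.pow_apply]
  rw [hsq, hmean, sum_sum_ite_eq_sum_sq_sum_fiber, ← add_sum_erase _ _ (mem_univ 0), filter_ne',
    add_sub_cancel_left]

end Variance

section TraceEstimator

variable {M d : ℕ}

def monomialExponent (x : Fin (M + 1) → Fin d) (p : Fin M × Fin d) : ℕ :=
  (if x p.1.castSucc = p.2 then 1 else 0) + (if x (Fin.last M) = p.2 then 1 else 0)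

lemma prod_pow_monomialExponent {Ω : Type*} (g : Fin M → Fin d → Ω → ℝ)
    (x : Fin (M + 1) → Fin d) (ω : Ω) :
    ∏ p : Fin M × Fin d, g p.1 p.2 ω ^ monomialExponent x p =
      ∏ t, g t (x t.castSucc) ω * g t (x (Fin.last M)) ω := by
  simp only [monomialExponent, pow_add, pow_ite, pow_one, pow_zero, Fintype.prod_prod_type,
    prod_mul_distrib, prod_ite_eq, mem_univ, if_true]

lemma traceEstimator_eq_sum_mul_prod_pow {Ω : Type*} (a : (Fin (M + 1) → Fin d) → ℝ)
    (g : Fin M → Fin d → Ω → ℝ) :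
    traceEstimator a g =
      fun ω => ∑ x, a x * ∏ p : Fin M × Fin d, g p.1 p.2 ω ^ monomialExponent x p := by
  funext ω
  simp only [prod_pow_monomialExponent]
  rw [← (Fin.snocEquiv fun _ => Fin d).sum_comp, Fintype.sum_prod_type]
  simp [traceEstimator, diagEstimator, Fin.snocEquiv]

def monomialParity (x : Fin (M + 1) → Fin d) : Fin M × Fin d → ZMod 2 :=
  fun p => (monomialExponent x p : ZMod 2)

lemma monomialParity_apply_eq_zero_iff (x : Fin (M + 1) → Fin d) (t : Fin M) (v : Fin d) :
    monomialParity x (t, v) = 0 ↔ (x t.castSucc = v ↔ x (Fin.last M) = v) := by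
  unfold monomialParity monomialExponent
  split_ifs <;> simp_all; decide

lemma iff_iff_of_monomialParity_eq {x y : Fin (M + 1) → Fin d}
    (h : monomialParity x = monomialParity y) (t : Fin M) (v : Fin d) :
    (x t.castSucc = v ↔ x (Fin.last M) = v) ↔ (y t.castSucc = v ↔ y (Fin.last M) = v) := by
  rw [← monomialParity_apply_eq_zero_iff, ← monomialParity_apply_eq_zero_iff, h]

lemma monomialParity_eq_zero_iff (x : Fin (M + 1) → Fin d) :
    monomialParity x = 0 ↔ ∃ j, x = fun _ => j := by
  constructor
  · intro h
    refine ⟨x (Fin.last M), funext fun k => Fin.lastCases rfl (fun t => ?_) k⟩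
    exact ((monomialParity_apply_eq_zero_iff x t _).mp (congrFun h (t, _))).mpr rfl
  · rintro ⟨j, rfl⟩
    funext ⟨t, v⟩
    exact (monomialParity_apply_eq_zero_iff _ t v).mpr Iff.rfl

lemma sum_monomialParity_eq_zero (f : (Fin (M + 1) → Fin d) → ℝ) :
    ∑ x with monomialParity x = 0, f x = ∑ j, f (fun _ => j) := by
  have : ({x | monomialParity x = 0} : Finset (Fin (M + 1) → Fin d)) =
      univ.image fun j _ => j := by
    ext x
    simp [monomialParity_eq_zero_iff, eq_comm]
  rw [this, sum_image fun i _ j _ h => congrFun h 0]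

lemma eq_of_monomialParity_eq {x y : Fin (M + 1) → Fin d}
    (h : monomialParity x = monomialParity y) (hlast : x (Fin.last M) = y (Fin.last M)) :
    x = y := by
  refine funext fun k => Fin.lastCases hlast (fun t => ?_) k
  have := iff_iff_of_monomialParity_eq h t (x t.castSucc)
  rw [hlast] at this
  tauto

lemma card_monomialParity_fiber_le_two {s : Fin M × Fin d → ZMod 2} (hs : s ≠ 0) :
    #{x | monomialParity x = s} ≤ 2 := by
  obtain ⟨⟨t, v⟩, hv⟩ := Function.ne_iff.mp hs
  -- In the fibre, exactly one of `x t` and `x (last)` equals `v`, and the last coordinate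
  -- together with the parity determines `x`; so `x ↦ (x (last) = v)` is injective there.
  refine (card_le_card_of_injOn (t := (univ : Finset Bool))
    (fun x => decide (x (Fin.last M) = v)) (fun _ _ => mem_univ _) ?_).trans le_rfl
  intro x hx y hy hxy
  simp only [coe_filter, mem_univ, true_and, Set.mem_ofPred_eq, decide_eq_decide] at hx hy hxy
  have hxv := (monomialParity_apply_eq_zero_iff x t v).not.mp (hx ▸ hv)
  have hyv := (monomialParity_apply_eq_zero_iff y t v).not.mp (hy ▸ hv)
  refine eq_of_monomialParity_eq (hx.trans hy.symm) ?_
  have hlast := iff_iff_of_monomialParity_eq (hx.trans hy.symm) t (x (Fin.last M))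
  grind

end TraceEstimator

theorem trace_estimator_variance_rademacher_le_general
    {M d : ℕ}
    (a : (Fin (M + 1) → Fin d) → ℝ)
    {Ω : Type*} [MeasureSpace Ω] [IsProbabilityMeasure (ℙ : Measure Ω)]
    (g : Fin M → Fin d → Ω → ℝ)
    (hmeas : ∀ n i, Measurable (g n i))
    (hindep : iIndepFun (fun p : Fin M × Fin d => g p.1 p.2) ℙ)
    (hdist : ∀ n i, Measure.map (g n i) ℙ = radMeasure)
    :
    variance (traceEstimator a g) ℙ ≤
      2 * ((∑ x : Fin (M + 1) → Fin d, (a x) ^ 2) - ∑ j : Fin d, (a (fun _ => j)) ^ 2) := by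
  rw [traceEstimator_eq_sum_mul_prod_pow, variance_sum_mul_prod_pow_of_iIndepFun_radMeasure
    (ε := fun p : Fin M × Fin d => g p.1 p.2) (fun p => hmeas p.1 p.2) hindep
    (fun p => hdist p.1 p.2)]
  calc _ ≤ ((2 : ℕ) : ℝ) * ∑ x with monomialParity x ∈ ({s | s ≠ 0} : Finset _), a x ^ 2 :=
        sum_sq_sum_fiber_le monomialParity a _ 2 fun s hs =>
          card_monomialParity_fiber_le_two (mem_filter.mp hs).2
    _ = _ := by
      rw [← sum_filter_add_sum_filter_not univ (fun x => monomialParity x = 0) (fun x => a x ^ 2),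
        sum_monomialParity_eq_zero]
      simp

theorem trace_estimator_variance_rademacher_le
    {M d : ℕ} (hM : 1 ≤ M) (hd : 1 ≤ d)
    (a : (Fin (M + 1) → Fin d) → ℝ)
    {Ω : Type*} [MeasureSpace Ω] [IsProbabilityMeasure (ℙ : Measure Ω)]
    (g : Fin M → Fin d → Ω → ℝ)
    (hmeas : ∀ n i, Measurable (g n i))
    (hindep : iIndepFun (fun p : Fin M × Fin d => g p.1 p.2) ℙ)
    (hdist : ∀ n i, Measure.map (g n i) ℙ = radMeasure)
    :
    variance (traceEstimator a g) ℙ ≤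
      2 * ((∑ x : Fin (M + 1) → Fin d, (a x) ^ 2) - ∑ j : Fin d, (a (fun _ => j)) ^ 2) :=
  trace_estimator_variance_rademacher_le_general a g hmeas hindep hdist
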